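/- arXiv:2406.10379 — 2 statements merged into one kernel-verified Lean document; each statement's English description precedes it below -/
import Mathlib

section
/- Let K be an infinite field, let M be a finite subset of K × K, and let (s₀, t₀) ∈ (K × K) \ M with t₀ ≠ 0. Then there exist a, b, c ∈ K such that a + b*t₀ + c*t₀² = s₀ and for every (s, t) ∈ M one has a + b*t + c*t² ≠ s. -/
/-- Through any point `(s₀, t₀)` with `t₀ ≠ 0` one can find a parabola
`s = a + b*t + c*t²` passing through it and avoiding a prescribed finite set. -/
theorem stmt6 (K : Type*) [Field K] [Infinite K] (M : Finset (K × K))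
    (s₀ t₀ : K) (hM : (s₀, t₀) ∉ M) (ht₀ : t₀ ≠ 0) :
    ∃ a b c : K, a + b * t₀ + c * t₀ ^ 2 = s₀ ∧
      ∀ p ∈ M, a + b * p.2 + c * p.2 ^ 2 ≠ p.1 := by
  classical
  obtain ⟨b, hb⟩ := Infinite.exists_notMem_finset
    (M.image (fun p => (p.1 - s₀) / (p.2 - t₀)))
  refine ⟨s₀ - b * t₀, b, 0, by ring, ?_⟩
  intro p hp heq
  rcases eq_or_ne p.2 t₀ with h | h
  · have h1 : p.1 = s₀ := by linear_combination -heq + b * h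
    have : p = (s₀, t₀) := Prod.ext h1 h
    exact hM (this ▸ hp)
  · apply hb
    refine Finset.mem_image.mpr ⟨p, hp, ?_⟩
    show (p.1 - s₀) / (p.2 - t₀) = b
    rw [div_eq_iff (sub_ne_zero.mpr h)]
    linear_combination -heq
end

section
/- Define contraction of finite lists of integers inductively: the empty list is contractible; and a list L is contractible if L can be written as A ++ [-1] ++ B where (i) if A and B are both nonempty with A = A' ++ [w₁] and B = [w₂] ++ B', then A' ++ [w₁+1, w₂+1] ++ B' is contractible; (ii) if A is empty and B = [w₂] ++ B', then [w₂+1] ++ B' is contractible; (iii) if B is empty and A = A' ++ [w₁], then A' ++ [w₁+1] is contractible; (iv) if A and B are both empty, L = [-1] is contractible. Theorem: if a list L of integers is contractible, contains exactly one entry equal to -1, and this entry is the first entry of L, then L = [-1, -2, -2, ..., -2], i.e., L is -1 followed by some number (possibly zero) of entries all equal to -2. -/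
/-- Contraction of weighted chains: one may blow down a `-1` entry, removing it
and incrementing its neighbors (which become adjacent). -/
inductive Contractible : List ℤ → Prop
  | nil : Contractible []
  | single : Contractible [-1]
  | left (w₂ : ℤ) (B' : List ℤ) :
      Contractible ((w₂ + 1) :: B') → Contractible (-1 :: w₂ :: B')
  | right (A' : List ℤ) (w₁ : ℤ) :
      Contractible (A' ++ [w₁ + 1]) → Contractible (A' ++ [w₁, -1])
  | inner (A' : List ℤ) (w₁ w₂ : ℤ) (B' : List ℤ) :
      Contractible (A' ++ [w₁ + 1, w₂ + 1] ++ B') →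
        Contractible (A' ++ [w₁, -1, w₂] ++ B')

lemma contractible_mem {L : List ℤ} (hc : Contractible L) (h : L ≠ []) :
    (-1 : ℤ) ∈ L := by
  cases hc <;> simp_all

/-- A contractible chain whose unique `-1` entry is its first entry is
`-1` followed by a string of `-2`'s. -/
theorem stmt8 (L : List ℤ) (hc : Contractible L)
    (hcount : L.count (-1) = 1) (hhead : L.head? = some (-1)) :
    ∃ p : ℕ, L = -1 :: List.replicate p (-2) := by
  revert hcount hhead
  induction hc with
  | nil => intro h1 h2; simp at h2
  | single => intro _ _; exact ⟨0, rfl⟩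
  | left w₂ B' h ih =>
      intro hcount hhead
      have hB : (L.count (-1) = 0) → True := fun _ => trivial
      have hcnt : (w₂ :: B').count (-1) = 0 := by
        have := hcount
        simp [List.count_cons] at this ⊢
        omega
      have hmem : (-1 : ℤ) ∈ (w₂ + 1) :: B' := contractible_mem h (by simp)
      have hBmem : (-1 : ℤ) ∉ B' := by
        intro hm
        have : 0 < (w₂ :: B').count (-1) := by
          rw [List.count_cons]
          have := List.count_pos_iff.mpr hm
          omega
        omega
      have hw : w₂ + 1 = -1 := by
        rcases List.mem_cons.mp hmem with h' | h'
        · exact h'.symm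
        · exact absurd h' hBmem
      have hcnt' : ((w₂ + 1) :: B').count (-1) = 1 := by
        rw [List.count_cons]
        have : B'.count (-1) = 0 := List.count_eq_zero.mpr hBmem
        simp [hw, this]
      obtain ⟨p, hp⟩ := ih hcnt' (by simp [hw])
      refine ⟨p + 1, ?_⟩
      have hB' : B' = List.replicate p (-2) := by
        have := hp
        rw [hw] at this
        exact (List.cons.injEq _ _ _ _ ▸ this).2
      have hw2 : w₂ = -2 := by omega
      simp [hw2, hB', List.replicate_succ]
  | right A' w₁ h ih =>
      intro hcount hhead
      exfalso
      cases A' with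
      | nil =>
          simp at hhead
          simp [List.count_append, List.count_cons, hhead] at hcount
      | cons a A'' =>
          simp at hhead
          simp [List.count_append, List.count_cons, hhead] at hcount
  | inner A' w₁ w₂ B' h ih =>
      intro hcount hhead
      exfalso
      cases A' with
      | nil =>
          simp at hhead
          simp [List.count_append, List.count_cons, hhead] at hcount
      | cons a A'' =>
          simp at hhead
          simp [List.count_append, List.count_cons, hhead] at hcount
end
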